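/- arXiv:2101.07188 — 4 statements merged into one kernel-verified Lean document; each statement's English description precedes it below -/
import Mathlib

section
/- Let α be a type with at least two distinct elements and let F = FreeGroup α be the free group on α (so F is a non-abelian free group). Let G be a normal subgroup of F with G ≠ ⊥, and let φ : F ≃* F be a group automorphism such that φ x = x for every x ∈ G. Then φ is the identity automorphism of F. -/
/-!
If `φ` fixes the normal subgroup `G` pointwise, then for every `x` the element `c = x⁻¹ φ(x)`
centralizes `G`. By Nielsen–Schreier the centralizer of a nontrivial element of a free group is a
free group with nontrivial centre, hence cyclic; so if `c ≠ 1`, then `G` is abelian. A nontrivial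
abelian normal subgroup of a free group is infinite cyclic, say `⟨w⟩`, and conjugation acts on it
by `w ↦ w^{±1}`. Hence every square centralizes `w`, so all squares commute with each other, which
fails for `a²` and `b²` when `a ≠ b` are generators.
-/

open Subgroup

theorem commute_sq_of_zpowers_normal {G : Type*} [Group G] {w : G} (hw : ¬IsOfFinOrder w)
    [hN : (zpowers w).Normal] (u : G) : Commute (u ^ 2) w := by
  obtain ⟨k, hk⟩ := mem_zpowers_iff.mp (hN.conj_mem w (mem_zpowers w) u)
  obtain ⟨l, hl⟩ := mem_zpowers_iff.mp (hN.conj_mem w (mem_zpowers w) u⁻¹)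
  have hlk : l * k = 1 := injective_zpow_iff_not_isOfFinOrder.mpr hw <| by
    calc w ^ (l * k) = (u⁻¹ * w * u⁻¹⁻¹) ^ k := by rw [zpow_mul, hl]
      _ = w ^ (1 : ℤ) := by rw [conj_zpow, hk]; group
  have hkk : k * k = 1 := Int.isUnit_mul_self (.of_mul_eq_one_right l hlk)
  refine mul_inv_eq_iff_eq_mul.mp ?_
  calc u ^ 2 * w * (u ^ 2)⁻¹ = u * (u * w * u⁻¹) * u⁻¹ := by rw [sq]; group
    _ = (u * w * u⁻¹) ^ k := by rw [conj_zpow, ← hk]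
    _ = w := by rw [← hk, ← zpow_mul, hkk, zpow_one]

theorem Subgroup.Normal.commute_inv_mul_apply {G : Type*} [Group G] {N : Subgroup G}
    (hN : N.Normal) {φ : G →* G} (hφ : ∀ g ∈ N, φ g = g) (x : G) {g : G} (hg : g ∈ N) :
    Commute (x⁻¹ * φ x) g := by
  have hconj : φ x * g * (φ x)⁻¹ = x * g * x⁻¹ := by
    simpa only [map_mul, map_inv, hφ g hg] using hφ _ (hN.conj_mem g hg x)
  calc x⁻¹ * φ x * g = x⁻¹ * (φ x * g * (φ x)⁻¹) * φ x := by group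
    _ = x⁻¹ * (x * g * x⁻¹) * φ x := by rw [hconj]
    _ = g * (x⁻¹ * φ x) := by group

namespace FreeGroup

variable {α : Type*}

theorem not_commute_of_of {a b : α} (hab : a ≠ b) : ¬Commute (of a) (of b) := by
  classical
  intro h
  have := (h.map (FreeGroup.lift
    fun x : α => if x = a then Equiv.swap (0 : Fin 3) 1 else Equiv.swap 1 2)).eq
  simp only [Fin.isValue, lift_apply_of, ↓reduceIte, hab.symm] at this
  exact absurd this (by decide)

theorem eq_zero_of_of_zpow_eq_of_zpow {a b : α} (hab : a ≠ b) {k l : ℤ}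
    (h : of a ^ k = of b ^ l) : k = 0 := by
  classical
  simpa [hab.symm, ← ofAdd_zsmul] using
    congrArg (FreeGroup.lift fun x : α => if x = a then Multiplicative.ofAdd (1 : ℤ) else 1) h

end FreeGroup

namespace IsFreeGroup

variable {F : Type*} [Group F] [IsFreeGroup F]

theorem isCyclic_of_subsingleton_generators [Subsingleton (Generators F)] : IsCyclic F := by
  have : IsCyclic (FreeGroup (Generators F)) := by
    cases isEmpty_or_nonempty (Generators F) with
    | inl _ => exact isCyclic_of_subsingleton
    | inr h =>
      have := uniqueOfSubsingleton h.some
      infer_instance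
  exact isCyclic_of_surjective (toFreeGroup F).symm.toMonoidHom (toFreeGroup F).symm.surjective

theorem isCyclic_of_isMulCommutative [IsMulCommutative F] : IsCyclic F := by
  have : Subsingleton (Generators F) := ⟨fun a b => by
    by_contra hab
    refine FreeGroup.not_commute_of_of hab ?_
    simpa using (show Commute ((toFreeGroup F).symm (.of a)) ((toFreeGroup F).symm (.of b)) from
      mul_comm' _ _).map (toFreeGroup F)⟩
  exact isCyclic_of_subsingleton_generators

end IsFreeGroup

namespace FreeGroup

variable {α : Type*}

theorem exists_zpow_eq_zpow_of_commute {u v : FreeGroup α} (huv : Commute u v) (hv : v ≠ 1) :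
    ∃ n m : ℤ, n ≠ 0 ∧ u ^ n = v ^ m := by
  have : IsMulCommutative (closure {u, v}) := isMulCommutative_closure <| by
    rintro x (rfl | rfl) y (rfl | rfl) <;> simp [huv.eq]
  have := IsFreeGroup.isCyclic_of_isMulCommutative (F := closure {u, v})
  obtain ⟨g, hg⟩ := IsCyclic.exists_generator (α := closure {u, v})
  obtain ⟨m, hm⟩ := hg ⟨u, subset_closure (by simp)⟩
  obtain ⟨n, hn⟩ := hg ⟨v, subset_closure (by simp)⟩
  replace hm : (g : FreeGroup α) ^ m = u := congrArg Subtype.val hm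
  replace hn : (g : FreeGroup α) ^ n = v := congrArg Subtype.val hn
  refine ⟨n, m, ?_, ?_⟩
  · rintro rfl
    exact hv (by simpa using hn.symm)
  · calc u ^ n = ((g : FreeGroup α) ^ m) ^ n := by rw [hm]
      _ = ((g : FreeGroup α) ^ n) ^ m := by rw [← zpow_mul, ← zpow_mul, mul_comm]
      _ = v ^ m := by rw [hn]

theorem center_eq_bot [Nontrivial α] : center (FreeGroup α) = ⊥ := by
  obtain ⟨a, b, hab⟩ := exists_pair_ne α
  refine eq_bot_iff.mpr fun z hz => mem_bot.mpr ?_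
  by_contra hz1
  rw [mem_center_iff] at hz
  obtain ⟨n, m, hn, ha⟩ := exists_zpow_eq_zpow_of_commute (hz (of a)) hz1
  obtain ⟨n', m', hn', hb⟩ := exists_zpow_eq_zpow_of_commute (hz (of b)) hz1
  have hab' : of a ^ (n * m') = of b ^ (n' * m) :=
    calc of a ^ (n * m') = (z ^ m) ^ m' := by rw [zpow_mul, ha]
      _ = (z ^ m') ^ m := by rw [← zpow_mul, ← zpow_mul, mul_comm]
      _ = of b ^ (n' * m) := by rw [← hb, ← zpow_mul]
  have hm' : m' = 0 := (mul_eq_zero.mp (eq_zero_of_of_zpow_eq_of_zpow hab hab')).resolve_left hn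
  exact hn' <| eq_zero_of_of_zpow_eq_of_zpow hab.symm (l := 0) <| by
    rw [hb, hm', zpow_zero, zpow_zero]

theorem isCyclic_centralizer {h : FreeGroup α} (hh : h ≠ 1) : IsCyclic (centralizer {h}) := by
  set C := centralizer ({h} : Set (FreeGroup α))
  set e := IsFreeGroup.toFreeGroup C
  have hhC : h ∈ C := mem_centralizer_singleton_iff.mpr rfl
  have : Subsingleton (IsFreeGroup.Generators C) := by
    refine not_nontrivial_iff_subsingleton.mp fun _ => hh ?_
    have : e ⟨h, hhC⟩ ∈ center _ := mem_center_iff.mpr fun g => by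
      obtain ⟨y, rfl⟩ := e.surjective g
      have hy : y * ⟨h, hhC⟩ = ⟨h, hhC⟩ * y := Subtype.ext (mem_centralizer_singleton_iff.mp y.2)
      rw [← _root_.map_mul, ← _root_.map_mul, hy]
    rw [center_eq_bot, mem_bot, MulEquivClass.map_eq_one_iff] at this
    exact congrArg Subtype.val this
  exact IsFreeGroup.isCyclic_of_subsingleton_generators

theorem eq_bot_of_isMulCommutative [Nontrivial α] (N : Subgroup (FreeGroup α)) [N.Normal]
    [IsMulCommutative N] : N = ⊥ := by
  obtain ⟨w, rfl⟩ := N.isCyclic_iff_exists_zpowers_eq_top.mp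
    IsFreeGroup.isCyclic_of_isMulCommutative
  refine zpowers_eq_bot.mpr (by_contra fun hw => ?_)
  obtain ⟨a, b, hab⟩ := exists_pair_ne α
  have hsq (u : FreeGroup α) : u ^ 2 ∈ centralizer {w} := mem_centralizer_singleton_iff.mpr
    (commute_sq_of_zpowers_normal (not_isOfFinOrder_of_isMulTorsionFree hw) u).eq
  have := isCyclic_centralizer hw
  have hab2 : Commute (of a ^ 2) (of b ^ 2) :=
    congrArg Subtype.val (mul_comm' (⟨_, hsq (of a)⟩ : centralizer {w}) ⟨_, hsq (of b)⟩)
  have hb2 : of b ^ 2 ≠ 1 := by simp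
  obtain ⟨n, m, hn, h⟩ := exists_zpow_eq_zpow_of_commute hab2 hb2
  rw [← zpow_natCast, ← zpow_natCast, ← zpow_mul, ← zpow_mul] at h
  exact hn (by simpa using eq_zero_of_of_zpow_eq_of_zpow hab h)

end FreeGroup

/-- An automorphism of a non-abelian free group fixing a nontrivial normal
subgroup pointwise is the identity. -/
theorem stmt_0 {α : Type*} (hα : ∃ a b : α, a ≠ b)
    (G : Subgroup (FreeGroup α)) [G.Normal] (hG : G ≠ ⊥)
    (φ : FreeGroup α ≃* FreeGroup α) (hφ : ∀ x ∈ G, φ x = x) :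
    φ = MulEquiv.refl (FreeGroup α) := by
  obtain ⟨a, b, hab⟩ := hα
  have : Nontrivial α := ⟨a, b, hab⟩
  ext x
  by_contra hx
  have hc : x⁻¹ * φ x ≠ 1 := fun h => hx (inv_mul_eq_one.mp h).symm
  have := FreeGroup.isCyclic_centralizer hc
  have hG_le : G ≤ centralizer {x⁻¹ * φ x} := fun g hg => mem_centralizer_singleton_iff.mpr
    (‹G.Normal›.commute_inv_mul_apply (φ := φ.toMonoidHom) hφ x hg).eq.symm
  have : IsMulCommutative G :=
    .of_setLike_mul_comm fun _ hg _ hg' => setLike_mul_comm (hG_le hg) (hG_le hg')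
  exact hG (FreeGroup.eq_bot_of_isMulCommutative G)
end

section
/- Let α be a type and let F = FreeGroup α. For every element g ∈ F with g ≠ 1, the centralizer of g in F is a cyclic subgroup; that is, there exists h ∈ F such that Subgroup.centralizer {g} = Subgroup.zpowers h. -/
/-!
The centralizer of `g ≠ 1` is free by Nielsen–Schreier, and `g` is a nontrivial central element
of it. In a free group, if `z` commutes with a generator `x`, compare the reduced words of `x * z`
and `z * x`: either both are one letter longer than the word of `z` or both are one letter
shorter, and in either case a word equals its own cyclic rotation, so every letter of `z` is
`x^{±1}`. Hence a free group with a nontrivial central element has exactly one generator and is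
infinite cyclic.
-/

theorem List.eq_of_mem_of_cons_eq_concat {γ : Type*} {x : γ} {l : List γ}
    (h : x :: l = l ++ [x]) : ∀ y ∈ x :: l, y = x := by
  have : Nonempty γ := ⟨x⟩
  have hrot : (x :: l).rotate 1 = x :: l := by rw [List.rotate_cons_succ, List.rotate_zero, h]
  obtain ⟨b, hb⟩ := List.rotate_one_eq_self_iff_eq_replicate.mp hrot
  have hx : x = b := List.eq_of_mem_replicate (hb ▸ List.mem_cons_self)
  intro y hy
  rw [hx]
  exact List.eq_of_mem_replicate (hb ▸ hy)

namespace FreeGroup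

section toWord

variable {α : Type*} [DecidableEq α]

theorem toWord_of_mul_eq_cons_or (a : α) (z : FreeGroup α) :
    (of a * z).toWord = (a, true) :: z.toWord ∨ z.toWord = (a, false) :: (of a * z).toWord := by
  rcases hz : z.toWord with _ | ⟨⟨b, c⟩, t⟩
  · simp [toWord_eq_nil_iff.mp hz]
  · by_cases hcancel : b = a ∧ c = false
    · obtain ⟨rfl, rfl⟩ := hcancel
      right
      have ht : IsReduced t := isReduced_toWord.infix (hz ▸ List.infix_cons List.infix_rfl)
      have hmk : z = (of b)⁻¹ * mk t := by rw [← mk_toWord (x := z), hz]; rfl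
      rw [hmk, mul_inv_cancel_left, toWord_mk, ht.reduce_eq]
    · left
      rw [toWord_mul, toWord_of, hz, List.singleton_append]
      refine IsReduced.reduce_eq (isReduced_cons_cons.mpr ⟨?_, hz ▸ isReduced_toWord⟩)
      rintro rfl
      cases c <;> simp_all

theorem toWord_mul_of_eq_concat_or (a : α) (z : FreeGroup α) :
    (z * of a).toWord = z.toWord ++ [(a, true)] ∨ z.toWord = (z * of a).toWord ++ [(a, false)] := by
  rcases List.eq_nil_or_concat' z.toWord with hz | ⟨t, ⟨b, c⟩, hz⟩
  · simp [toWord_eq_nil_iff.mp hz]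
  · by_cases hcancel : b = a ∧ c = false
    · obtain ⟨rfl, rfl⟩ := hcancel
      right
      have ht : IsReduced t := isReduced_toWord.infix (hz ▸ (List.prefix_append t _).isInfix)
      have hmk : z = mk t * (of b)⁻¹ := by rw [← mk_toWord (x := z), hz]; rfl
      rw [hz, hmk, inv_mul_cancel_right, toWord_mk, ht.reduce_eq]
    · left
      rw [toWord_mul, toWord_of, hz]
      refine (IsReduced.append_overlap (hz ▸ isReduced_toWord) ?_ (List.cons_ne_nil _ _)).reduce_eq
      refine isReduced_cons_cons.mpr ⟨?_, IsReduced.singleton⟩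
      rintro rfl
      cases c <;> simp_all

theorem fst_eq_of_mem_toWord_of_commute {a : α} {z : FreeGroup α} (h : Commute z (of a))
    {p : α × Bool} (hp : p ∈ z.toWord) : p.1 = a := by
  have hr := toWord_mul_of_eq_concat_or a z
  rw [h.eq] at hr
  rcases toWord_of_mul_eq_cons_or a z with hl | hl <;> rcases hr with hr | hr
  · rw [List.eq_of_mem_of_cons_eq_concat (hl.symm.trans hr) p (List.mem_cons_of_mem _ hp)]
  · have h₁ := congrArg List.length hl
    have h₂ := congrArg List.length hr
    simp only [List.length_cons, List.length_append] at h₁ h₂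
    omega
  · have h₁ := congrArg List.length hl
    have h₂ := congrArg List.length hr
    simp only [List.length_cons, List.length_append] at h₁ h₂
    omega
  · rw [hl] at hp
    rw [List.eq_of_mem_of_cons_eq_concat (hl.symm.trans hr) p hp]

end toWord

theorem isCyclic_of_nontrivial_center {α : Type*} [Nontrivial (Subgroup.center (FreeGroup α))] :
    IsCyclic (FreeGroup α) := by
  classical
  obtain ⟨⟨z, hz⟩, hz1⟩ := exists_ne (1 : Subgroup.center (FreeGroup α))
  obtain ⟨p, hp⟩ := List.exists_mem_of_ne_nil z.toWord
    (fun h => hz1 (Subtype.ext (toWord_eq_nil_iff.mp h)))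
  have : Unique α :=
    { default := p.1
      uniq := fun a => (fst_eq_of_mem_toWord_of_commute
        (Subgroup.mem_center_iff.mp hz (of a)).symm hp).symm }
  infer_instance

end FreeGroup

theorem IsFreeGroup.isCyclic_of_nontrivial_center {G : Type*} [Group G] [IsFreeGroup G]
    [Nontrivial (Subgroup.center G)] : IsCyclic G := by
  let e := IsFreeGroup.toFreeGroup G
  have : Nontrivial (Subgroup.center (FreeGroup (IsFreeGroup.Generators G))) :=
    (Subgroup.centerCongr e).symm.surjective.nontrivial
  exact e.isCyclic.mpr FreeGroup.isCyclic_of_nontrivial_center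

/-- Centralizers of nontrivial elements of a free group are cyclic. -/
theorem stmt_5 {α : Type*} (g : FreeGroup α) (hg : g ≠ 1) :
    ∃ h : FreeGroup α, Subgroup.centralizer {g} = Subgroup.zpowers h := by
  set C := Subgroup.centralizer ({g} : Set (FreeGroup α))
  have hgC : g ∈ C := Subgroup.mem_centralizer_singleton_iff.mpr rfl
  have hg_center : (⟨g, hgC⟩ : C) ∈ Subgroup.center C :=
    Subgroup.mem_center_iff.mpr fun x => Subtype.ext (Subgroup.mem_centralizer_singleton_iff.mp x.2)
  have : Nontrivial (Subgroup.center C) :=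
    nontrivial_of_ne ⟨_, hg_center⟩ 1 fun h => hg (congrArg Subtype.val (congrArg Subtype.val h))
  obtain ⟨k, hk⟩ :=
    C.isCyclic_iff_exists_zpowers_eq_top.mp IsFreeGroup.isCyclic_of_nontrivial_center
  exact ⟨k, hk.symm⟩
end

section
/- Let α be a type and let F = FreeGroup α. If g, h ∈ F commute (g * h = h * g), then there exists k ∈ F such that both g and h are integer powers of k, i.e., g ∈ Subgroup.zpowers k and h ∈ Subgroup.zpowers k. -/
/-!
By Nielsen–Schreier the subgroup generated by `g` and `h` is free, and it is abelian since `g`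
and `h` commute. Two distinct basis elements of a free group do not commute, so an abelian free
group has at most one generator and is therefore cyclic.
-/

namespace FreeGroup

variable {α : Type*}

theorem eq_of_of_mul_of_eq_of_mul_of {a b : α} (h : of a * of b = of b * of a) : a = b := by
  classical
  exact (by simpa [toWord_mul, toWord_of, reduce] using congrArg toWord h : a = b ∧ b = a).1

theorem subsingleton_of_isMulCommutative [IsMulCommutative (FreeGroup α)] : Subsingleton α :=
  ⟨fun _ _ ↦ eq_of_of_mul_of_eq_of_mul_of (mul_comm' _ _)⟩

theorem isCyclic_of_subsingleton_generators [Subsingleton α] : IsCyclic (FreeGroup α) := by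
  cases isEmpty_or_nonempty α with
  | inl _ => infer_instance
  | inr hα =>
    have : Unique α := uniqueOfSubsingleton hα.some
    infer_instance

end FreeGroup

theorem IsFreeGroup.isCyclic_of_isMulCommutative_s6 {G : Type*} [Group G] [IsFreeGroup G]
    [IsMulCommutative G] : IsCyclic G := by
  let e := IsFreeGroup.toFreeGroup G
  have : IsMulCommutative (FreeGroup (Generators G)) :=
    .of_comm fun x y ↦ e.symm.injective (by simp only [map_mul]; exact mul_comm' _ _)
  have := FreeGroup.subsingleton_of_isMulCommutative (α := Generators G)
  exact e.isCyclic.mpr FreeGroup.isCyclic_of_subsingleton_generators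

theorem Subgroup.exists_subset_zpowers_of_isCyclic_closure {G : Type*} [Group G] {s : Set G}
    [IsCyclic (closure s)] : ∃ k : G, s ⊆ zpowers k := by
  obtain ⟨k, hk⟩ := (closure s).isCyclic_iff_exists_zpowers_eq_top.mp ‹_›
  exact ⟨k, hk ▸ subset_closure⟩

/-- Commuting elements of a free group are powers of a common element. -/
theorem stmt_6 {α : Type*} (g h : FreeGroup α) (hgh : g * h = h * g) :
    ∃ k : FreeGroup α, g ∈ Subgroup.zpowers k ∧ h ∈ Subgroup.zpowers k := by
  have : IsMulCommutative (Subgroup.closure {g, h}) := by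
    refine Subgroup.isMulCommutative_closure ?_
    simp only [Set.mem_insert_iff, Set.mem_singleton_iff]
    rintro x (rfl | rfl) y (rfl | rfl) <;> first | rfl | exact hgh | exact hgh.symm
  -- `IsFreeGroup (Subgroup.closure {g, h})` is Mathlib's Nielsen–Schreier instance.
  have := IsFreeGroup.isCyclic_of_isMulCommutative_s6 (G := Subgroup.closure {g, h})
  obtain ⟨k, hk⟩ := Subgroup.exists_subset_zpowers_of_isCyclic_closure (s := {g, h})
  exact ⟨k, hk (by simp), hk (by simp)⟩
end

section
/- Let α be a type with at least two distinct elements and let F = FreeGroup α. Every normal subgroup G of F with G ≠ ⊥ is non-abelian: there exist x, y ∈ G with x * y ≠ y * x. -/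
/-!
By Nielsen–Schreier an abelian subgroup of a free group is free and abelian, hence cyclic. So if
`G` were abelian it would be `⟨w⟩` with `w ≠ 1` of infinite order. Normality makes every `c` act
on `⟨w⟩` by `w ↦ w ^ (±1)`, so `c²` commutes with `w`. Commuting elements of a free group lie in a
common cyclic subgroup; applied to `a²` and `w`, then to a power of `a²` and `b²` (for generators
`a ≠ b`), this gives `a ^ n = b ^ m` with `n ≠ 0`, which the exponent sum of `a` rules out.
-/

open FreeGroup Subgroup

theorem commute_sq_of_normal_zpowers {G : Type*} [Group G] {w : G} (hw : ¬IsOfFinOrder w)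
    [hN : (zpowers w).Normal] (c : G) : Commute (c ^ 2) w := by
  obtain ⟨k, hk⟩ := mem_zpowers_iff.1 (hN.conj_mem w (mem_zpowers w) c)
  obtain ⟨m, hm⟩ := mem_zpowers_iff.1 (hN.conj_mem w (mem_zpowers w) c⁻¹)
  have hmk : w ^ (m * k) = w ^ (1 : ℤ) := by
    rw [zpow_mul, hm, conj_zpow, hk]; group
  have hk2 : k * k = 1 :=
    Int.isUnit_mul_self (.of_mul_eq_one_right m (injective_zpow_iff_not_isOfFinOrder.2 hw hmk))
  calc c ^ 2 * w = c * (c * w * c⁻¹) * c⁻¹ * c ^ 2 := by rw [sq]; group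
    _ = (w ^ k) ^ k * c ^ 2 := by rw [← hk, ← conj_zpow, ← hk]
    _ = w * c ^ 2 := by rw [← zpow_mul, hk2, zpow_one]

theorem FreeGroup.not_commute_of_ne {α : Type*} {a b : α} (h : a ≠ b) :
    ¬Commute (of a) (of b) := by
  classical
  intro hc
  let f : FreeGroup α →* Equiv.Perm (Fin 3) :=
    FreeGroup.lift fun x => if x = a then Equiv.swap 0 1 else Equiv.swap 1 2
  have : Equiv.swap (0 : Fin 3) 1 * Equiv.swap 1 2 = Equiv.swap 1 2 * Equiv.swap 0 1 := by
    simpa [f, h.symm] using (hc.map f).eq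
  revert this
  decide

theorem FreeGroup.eq_zero_of_zpow_of_eq_zpow_of {α : Type*} {a b : α} (hab : a ≠ b) {n m : ℤ}
    (h : of a ^ n = of b ^ m) : n = 0 := by
  classical
  have := congrArg (FreeGroup.lift (Pi.mulSingle a (Multiplicative.ofAdd (1 : ℤ)))) h
  simpa [Pi.mulSingle_eq_of_ne hab.symm, ← ofAdd_zsmul] using this

theorem IsFreeGroup.isCyclic (G : Type*) [Group G] [IsMulCommutative G] [IsFreeGroup G] :
    IsCyclic G := by
  let e := IsFreeGroup.toFreeGroup G
  have : Subsingleton (IsFreeGroup.Generators G) := ⟨fun s t => by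
    by_contra hst
    refine FreeGroup.not_commute_of_ne hst ?_
    simpa using Commute.map (mul_comm' (e.symm (FreeGroup.of s)) (e.symm (FreeGroup.of t))) e⟩
  rw [e.isCyclic]
  cases isEmpty_or_nonempty (IsFreeGroup.Generators G)
  · infer_instance
  · have := uniqueOfSubsingleton (Classical.arbitrary (IsFreeGroup.Generators G))
    infer_instance

theorem FreeGroup.exists_zpow_eq_zpow_of_commute_s7 {α : Type*} {u v : FreeGroup α}
    (h : Commute u v) (hv : v ≠ 1) : ∃ i j : ℤ, i ≠ 0 ∧ u ^ i = v ^ j := by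
  have : IsMulCommutative (closure {u, v}) := isMulCommutative_closure <| by
    rintro x (rfl | rfl) y (rfl | rfl)
    exacts [rfl, h.eq, h.eq.symm, rfl]
  obtain ⟨g, hg⟩ := (closure {u, v}).isCyclic_iff_exists_zpowers_eq_top.1 (IsFreeGroup.isCyclic _)
  obtain ⟨p, rfl⟩ := mem_zpowers_iff.1 (hg ▸ subset_closure (by simp) : u ∈ zpowers g)
  obtain ⟨q, rfl⟩ := mem_zpowers_iff.1 (hg ▸ subset_closure (by simp) : v ∈ zpowers g)
  exact ⟨q, p, by rintro rfl; exact hv (zpow_zero g), by rw [← zpow_mul, ← zpow_mul, mul_comm]⟩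

/-- A nontrivial normal subgroup of a non-abelian free group is non-abelian. -/
theorem stmt_7 {α : Type*} (hα : ∃ a b : α, a ≠ b)
    (G : Subgroup (FreeGroup α)) [G.Normal] (hG : G ≠ ⊥) :
    ∃ x ∈ G, ∃ y ∈ G, x * y ≠ y * x := by
  by_contra! hcomm
  obtain ⟨a, b, hab⟩ := hα
  have : IsMulCommutative G := .of_setLike_mul_comm hcomm
  obtain ⟨w, rfl⟩ := G.isCyclic_iff_exists_zpowers_eq_top.1 (IsFreeGroup.isCyclic G)
  have hw : w ≠ 1 := by rintro rfl; simp at hG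
  have hw_inf := not_isOfFinOrder_of_isMulTorsionFree hw
  obtain ⟨i, j, hi, hij⟩ :=
    exists_zpow_eq_zpow_of_commute_s7 (commute_sq_of_normal_zpowers hw_inf (of a)) hw
  have : Commute ((of a ^ 2) ^ i) (of b ^ 2) :=
    hij ▸ ((commute_sq_of_normal_zpowers hw_inf (of b)).zpow_right j).symm
  obtain ⟨k, l, hk, hkl⟩ := exists_zpow_eq_zpow_of_commute_s7 this (sq_eq_one.not.2 (of_ne_one b))
  rw [← zpow_natCast, ← zpow_natCast, ← zpow_mul, ← zpow_mul, ← zpow_mul] at hkl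
  exact mul_ne_zero (by norm_num) (mul_ne_zero hi hk) (eq_zero_of_zpow_of_eq_zpow_of hab hkl)
end
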